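/- Let k ≥ 3 and let D be a unitrivalent diagram on k colors having a connected component C of degree k−1, i.e. a tree component with exactly one univalent vertex of each of the k colors. Then the class of D in B^{hl}(k) is zero. -/

import Mathlib

/-!
Unitrivalent diagrams on `k` colors, in half-edge (combinatorial map) form.

A diagram is given by a finite set `H` of half-edges, a fixed-point-free
involution `sig` pairing the two half-edges of each edge, and a permutation
`tau` with `tau ^ 3 = id` whose orbits are the vertices: fixed points are
univalent vertices (carrying a color in `Fin k`) and 3-element orbits are
trivalent vertices, the cyclic ordering of whose incident edges is given by
`tau`.  Every connected component is required to contain a univalent vertex.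
-/
structure Diagram (k : ℕ) where
  H : Type
  fin : Fintype H
  dec : DecidableEq H
  sig : H → H
  sig_invol : ∀ h, sig (sig h) = h
  sig_ne : ∀ h, sig h ≠ h
  tau : H → H
  tau_cube : ∀ h, tau (tau (tau h)) = h
  color : H → Fin k
  conn : ∀ h, ∃ h', Relation.ReflTransGen (fun a b => b = sig a ∨ b = tau a) h h' ∧ tau h' = h'

attribute [instance] Diagram.fin Diagram.dec

namespace Diagram

variable {k : ℕ}

/-- `a` and `b` are half-edges of the same connected component. -/
def Reach (D : Diagram k) (a b : D.H) : Prop :=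
  Relation.ReflTransGen (fun x y => y = D.sig x ∨ y = D.tau x) a b

/-- The set of half-edges of the connected component of `h0`. -/
def compSet (D : Diagram k) (h0 : D.H) : Set D.H := {x | D.Reach h0 x}

/-- The set of univalent vertices (= `tau`-fixed half-edges) of the component of `h0`. -/
def univIn (D : Diagram k) (h0 : D.H) : Set D.H := {x | D.Reach h0 x ∧ D.tau x = x}

/-- The component of `h0` is a tree.  (Euler-count criterion: a connected component of a
graph all of whose vertices have degree 1 or 3 and with `u` univalent vertices is a tree
iff it has exactly `4 * u - 6` half-edges.) -/
def IsTreeAt (D : Diagram k) (h0 : D.H) : Prop :=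
  (D.compSet h0).ncard + 6 = 4 * (D.univIn h0).ncard

/-- The component of `h0` is boring: it has two univalent vertices of the same color,
or it contains a cycle (i.e. is not a tree). -/
def IsBoringAt (D : Diagram k) (h0 : D.H) : Prop :=
  (∃ x ∈ D.univIn h0, ∃ y ∈ D.univIn h0, x ≠ y ∧ D.color x = D.color y) ∨ ¬ D.IsTreeAt h0

def HasBoring (D : Diagram k) : Prop := ∃ h0, D.IsBoringAt h0

/-- `m D i j` (for `i ≠ j`) is the number of connected components of `D` consisting of a
single edge with one endpoint colored `i` and the other colored `j`; each such component
is counted via its `i`-colored end. -/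
noncomputable def m (D : Diagram k) (i j : Fin k) : ℕ :=
  {x : D.H | D.tau x = x ∧ D.tau (D.sig x) = D.sig x ∧ D.color x = i ∧
    D.color (D.sig x) = j}.ncard

/-- Number of vertices of the component of `h0`. -/
noncomputable def vertAt (D : Diagram k) (h0 : D.H) : ℕ :=
  (D.univIn h0).ncard + ((D.compSet h0).ncard - (D.univIn h0).ncard) / 3

/-- Degree (half the number of vertices) of the component of `h0`. -/
noncomputable def degAt (D : Diagram k) (h0 : D.H) : ℕ := D.vertAt h0 / 2

/-- Total number of vertices of the diagram. -/
noncomputable def numVert (D : Diagram k) : ℕ :=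
  Nat.card {h : D.H // D.tau h = h} +
    (Nat.card D.H - Nat.card {h : D.H // D.tau h = h}) / 3

/-- Degree of the diagram: half its total number of vertices. -/
noncomputable def deg (D : Diagram k) : ℕ := D.numVert / 2

/-- Isomorphism of unitrivalent diagrams: a bijection of half-edges commuting with the
edge involution and the vertex rotation, and preserving the colors of univalent vertices. -/
def Iso (D E : Diagram k) : Prop :=
  ∃ e : D.H ≃ E.H,
    (∀ h, e (D.sig h) = E.sig (e h)) ∧
    (∀ h, e (D.tau h) = E.tau (e h)) ∧
    (∀ h, D.tau h = h → E.color (e h) = D.color h)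

end Diagram

/-- The free real vector space on (the type of) unitrivalent diagrams.  Together with the
relation `IsoRel` identifying isomorphic diagrams, quotienting by its span realizes the
vector space spanned by isomorphism classes of diagrams. -/
abbrev FreeD (k : ℕ) := Diagram k →₀ ℝ

noncomputable def fd {k : ℕ} (D : Diagram k) : FreeD k := Finsupp.single D 1

/-- Identify isomorphic diagrams. -/
def IsoRel (k : ℕ) : Set (FreeD k) :=
  {x | ∃ D E : Diagram k, Diagram.Iso D E ∧ x = fd D - fd E}

/-- The antisymmetry relation: reversing the cyclic ordering at one trivalent vertex
(the `tau`-orbit of `v`) negates the diagram, i.e. `D + D' = 0`. -/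
def ASRel (k : ℕ) : Set (FreeD k) :=
  {x | ∃ (D D' : Diagram k) (e : D.H ≃ D'.H) (v : D.H),
      D.tau v ≠ v ∧
      (∀ h, e (D.sig h) = D'.sig (e h)) ∧
      (∀ h, D.tau h = h → D'.color (e h) = D.color h) ∧
      (∀ h, (h = v ∨ h = D.tau v ∨ h = D.tau (D.tau v)) →
        D'.tau (e h) = e (D.tau (D.tau h))) ∧
      (∀ h, ¬(h = v ∨ h = D.tau v ∨ h = D.tau (D.tau v)) →
        D'.tau (e h) = e (D.tau h)) ∧
      x = fd D + fd D'}

/-- The IHX relation `I - H + X = 0`.  In `DI` the edge `{a, b}` joins the trivalent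
vertices `(a, h2, h1)` and `(b, h3, h4)` (cyclic orderings as recorded by `tau`);
`DH` and `DX` are the same diagram except that the two trivalent vertices are rewired
as `(a, h1, h3), (b, h4, h2)` resp. `(a, h1, h4), (b, h3, h2)`.  (With counterclockwise
cyclic orderings this is the standard I, H and X configurations on the four external
legs attached to `h1, h2, h3, h4`.) -/
def IHXRel (k : ℕ) : Set (FreeD k) :=
  {x | ∃ (DI DH DX : Diagram k) (eH : DI.H ≃ DH.H) (eX : DI.H ≃ DX.H)
      (a b h1 h2 h3 h4 : DI.H),
      DI.sig a = b ∧
      ([a, b, h1, h2, h3, h4] : List DI.H).Nodup ∧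
      DI.tau a = h2 ∧ DI.tau h2 = h1 ∧ DI.tau h1 = a ∧
      DI.tau b = h3 ∧ DI.tau h3 = h4 ∧ DI.tau h4 = b ∧
      (∀ h, eH (DI.sig h) = DH.sig (eH h)) ∧
      (∀ h, DI.tau h = h → DH.color (eH h) = DI.color h) ∧
      (∀ h, h ∉ ([a, b, h1, h2, h3, h4] : List DI.H) → eH (DI.tau h) = DH.tau (eH h)) ∧
      DH.tau (eH a) = eH h1 ∧ DH.tau (eH h1) = eH h3 ∧ DH.tau (eH h3) = eH a ∧
      DH.tau (eH b) = eH h4 ∧ DH.tau (eH h4) = eH h2 ∧ DH.tau (eH h2) = eH b ∧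
      (∀ h, eX (DI.sig h) = DX.sig (eX h)) ∧
      (∀ h, DI.tau h = h → DX.color (eX h) = DI.color h) ∧
      (∀ h, h ∉ ([a, b, h1, h2, h3, h4] : List DI.H) → eX (DI.tau h) = DX.tau (eX h)) ∧
      DX.tau (eX a) = eX h1 ∧ DX.tau (eX h1) = eX h4 ∧ DX.tau (eX h4) = eX a ∧
      DX.tau (eX b) = eX h3 ∧ DX.tau (eX h3) = eX h2 ∧ DX.tau (eX h2) = eX b ∧
      x = fd DI - fd DH + fd DX}

/-- Diagrams with a boring component are zero. -/
def BoringRel (k : ℕ) : Set (FreeD k) :=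
  {x | ∃ D : Diagram k, D.HasBoring ∧ x = fd D}

/-- A rooted tree: a unitrivalent graph which is a tree (Euler-count criterion), with a
distinguished (uncolored) univalent vertex `root`; the other univalent vertices carry
colors.  Used to form the link relations. -/
structure GraftTree (k : ℕ) where
  H : Type
  fin : Fintype H
  dec : DecidableEq H
  sig : H → H
  sig_invol : ∀ h, sig (sig h) = h
  sig_ne : ∀ h, sig h ≠ h
  tau : H → H
  tau_cube : ∀ h, tau (tau (tau h)) = h
  root : H
  root_fix : tau root = root
  color : H → Fin k
  conn : ∀ h, Relation.ReflTransGen (fun a b => b = sig a ∨ b = tau a) root h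
  tree : Nat.card H + 6 = 4 * Nat.card {h : H // tau h = h}

attribute [instance] GraftTree.fin GraftTree.dec

/-- The edge involution of the diagram obtained by grafting the rooted tree `X` at the
univalent vertex `u` of `E`: the edge of `E` at `u` is subdivided by a new trivalent
vertex `{root, false, true}`, whose half-edge `false` pairs with `u`, whose half-edge
`true` pairs with the old partner `E.sig u`, and whose half-edge `root` is paired
inside `X` (so the root edge of `X` is attached at the new vertex). -/
def graftSig {k : ℕ} (E : Diagram k) (u : E.H) (X : GraftTree k) :
    E.H ⊕ (X.H ⊕ Bool) → E.H ⊕ (X.H ⊕ Bool)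
  | Sum.inl h =>
    if h = u then Sum.inr (Sum.inr false)
    else if h = E.sig u then Sum.inr (Sum.inr true)
    else Sum.inl (E.sig h)
  | Sum.inr (Sum.inl x) => Sum.inr (Sum.inl (X.sig x))
  | Sum.inr (Sum.inr false) => Sum.inl u
  | Sum.inr (Sum.inr true) => Sum.inl (E.sig u)

/-- The vertex rotation of the grafted diagram: the root of `X` is merged into the new
trivalent vertex `(root, false, true)`; everything else is unchanged. -/
def graftTau {k : ℕ} (E : Diagram k) (_u : E.H) (X : GraftTree k) :
    E.H ⊕ (X.H ⊕ Bool) → E.H ⊕ (X.H ⊕ Bool)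
  | Sum.inl h => Sum.inl (E.tau h)
  | Sum.inr (Sum.inl x) =>
    if x = X.root then Sum.inr (Sum.inr false) else Sum.inr (Sum.inl (X.tau x))
  | Sum.inr (Sum.inr false) => Sum.inr (Sum.inr true)
  | Sum.inr (Sum.inr true) => Sum.inr (Sum.inl X.root)

def graftColor {k : ℕ} (E : Diagram k) (u : E.H) (X : GraftTree k) :
    E.H ⊕ (X.H ⊕ Bool) → Fin k
  | Sum.inl h => E.color h
  | Sum.inr (Sum.inl x) => X.color x
  | Sum.inr (Sum.inr _) => E.color u

/-- `G` is (isomorphic to) the diagram obtained by grafting `X` at `u`. -/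
def IsGraft {k : ℕ} (E : Diagram k) (u : E.H) (X : GraftTree k) (G : Diagram k) : Prop :=
  ∃ e : (E.H ⊕ (X.H ⊕ Bool)) ≃ G.H,
    (∀ p, e (graftSig E u X p) = G.sig (e p)) ∧
    (∀ p, e (graftTau E u X p) = G.tau (e p)) ∧
    (∀ p, graftTau E u X p = p → G.color (e p) = graftColor E u X p)

/-- The link relations (*): for every diagram `E`, color `i` and rooted tree `X`, the sum
over all univalent vertices `u` of `E` of color `i` of the diagrams obtained by grafting
`X` at `u` is zero. -/
def LinkRel (k : ℕ) : Set (FreeD k) :=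
  {x | ∃ (E : Diagram k) (i : Fin k) (X : GraftTree k) (g : E.H → Diagram k),
      (∀ u, E.tau u = u → E.color u = i → IsGraft E u X (g u)) ∧
      x = ∑ u ∈ Finset.univ.filter (fun u => E.tau u = u ∧ E.color u = i), fd (g u)}

/-- The relations defining `B^{hsl}(k)` (string links up to homotopy): isomorphism,
antisymmetry, IHX, and killing diagrams with boring components. -/
noncomputable def BhslRel (k : ℕ) : Submodule ℝ (FreeD k) :=
  Submodule.span ℝ (IsoRel k ∪ ASRel k ∪ IHXRel k ∪ BoringRel k)

/-- The relations defining `B^{hl}(k)`: those of `B^{hsl}(k)` together with the link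
relations (*). -/
noncomputable def BhlRel (k : ℕ) : Submodule ℝ (FreeD k) :=
  Submodule.span ℝ (IsoRel k ∪ ASRel k ∪ IHXRel k ∪ BoringRel k ∪ LinkRel k)

/-- The space `B^{hl}(k)` of unitrivalent diagrams for `k`-component links up to homotopy. -/
abbrev Bhl (k : ℕ) := FreeD k ⧸ BhlRel k

/-- The class of a diagram in `B^{hl}(k)`. -/
noncomputable def bhlClass {k : ℕ} (D : Diagram k) : Bhl k :=
  Submodule.Quotient.mk (fd D)

/-!
A diagram with a boring component vanishes, so assume `D` has none. A tree with at least three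
univalent vertices has a cherry: a trivalent vertex two of whose edges lead to univalent
vertices `p`, `q`, of distinct colors `c`, `d`. Let `E` be `D` with the component of the cherry
replaced by a strut `c — d`, and `X` the rest of that component, rooted where the cherry was
attached; then `D` is the graft of `X` at the `c`-end of the strut. In the link relation for
`E`, `c` and `X`, the component of any other `c`-colored univalent vertex of `E` either carries
a color other than `c`, `d`, which `X` also carries, so that the graft is boring, or is itself
a strut `c — d`, and then the graft is again `D`. The relation therefore reads `n • D = 0` with
`n ≥ 1`.
-/

/-- The relation generating `Diagram.Reach`, for bare maps, so that it is available while a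
diagram is being built. -/
def HalfEdgeStep {α : Type*} (s t : α → α) (a b : α) : Prop := b = s a ∨ b = t a

theorem HalfEdgeStep.of_sig {α : Type*} {s t : α → α} {a b : α} (h : s a = b) :
    HalfEdgeStep s t a b := Or.inl h.symm

theorem HalfEdgeStep.of_tau {α : Type*} {s t : α → α} {a b : α} (h : t a = b) :
    HalfEdgeStep s t a b := Or.inr h.symm

theorem reflTransGen_halfEdgeStep_symm {α : Type*} {s t : α → α} (hs : ∀ a, s (s a) = a)
    (ht : ∀ a, t (t (t a)) = a) {a b : α} (h : Relation.ReflTransGen (HalfEdgeStep s t) a b) :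
    Relation.ReflTransGen (HalfEdgeStep s t) b a := by
  induction h with
  | refl => exact .refl
  | @tail b c _ hbc ih =>
    refine Relation.ReflTransGen.trans ?_ ih
    rcases hbc with rfl | rfl
    · exact .single (.of_sig (hs b))
    · exact .tail (.single (.of_tau rfl)) (.of_tau (ht b))

namespace Diagram

variable {k : ℕ} {D : Diagram k}

theorem Reach.symm {a b : D.H} (h : D.Reach a b) : D.Reach b a :=
  reflTransGen_halfEdgeStep_symm D.sig_invol D.tau_cube h

theorem Reach.trans {a b c : D.H} (h : D.Reach a b) (h' : D.Reach b c) : D.Reach a c :=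
  Relation.ReflTransGen.trans h h'

theorem Reach.sig {a b : D.H} (h : D.Reach a b) : D.Reach a (D.sig b) :=
  Relation.ReflTransGen.tail h (Or.inl rfl)

theorem Reach.tau {a b : D.H} (h : D.Reach a b) : D.Reach a (D.tau b) :=
  Relation.ReflTransGen.tail h (Or.inr rfl)

theorem reach_sig (a : D.H) : D.Reach a (D.sig a) := Reach.sig .refl

theorem reach_tau (a : D.H) : D.Reach a (D.tau a) := Reach.tau .refl

theorem not_reach_sig {a b : D.H} (h : ¬ D.Reach a b) : ¬ D.Reach a (D.sig b) :=
  fun h' => h (D.sig_invol b ▸ h'.sig)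

theorem not_reach_tau {a b : D.H} (h : ¬ D.Reach a b) : ¬ D.Reach a (D.tau b) :=
  fun h' => h (D.tau_cube b ▸ h'.tau.tau)

theorem compSet_eq_of_reach {a b : D.H} (h : D.Reach a b) : D.compSet a = D.compSet b :=
  Set.ext fun _ => ⟨h.symm.trans, h.trans⟩

theorem univIn_eq_of_reach {a b : D.H} (h : D.Reach a b) : D.univIn a = D.univIn b :=
  Set.ext fun _ => and_congr_left' ⟨h.symm.trans, h.trans⟩

theorem isTreeAt_iff_of_reach {a b : D.H} (h : D.Reach a b) : D.IsTreeAt a ↔ D.IsTreeAt b := by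
  rw [IsTreeAt, IsTreeAt, compSet_eq_of_reach h, univIn_eq_of_reach h]

theorem sig_injective : Function.Injective D.sig :=
  Function.LeftInverse.injective D.sig_invol

theorem tau_injective : Function.Injective D.tau :=
  Function.LeftInverse.injective (g := D.tau ∘ D.tau) D.tau_cube

theorem eq_of_tau_eq_fixed {a b : D.H} (hb : D.tau b = b) (h : D.tau a = b) : a = b :=
  D.tau_injective (h.trans hb.symm)

theorem ne_of_tau_eq_of_tau_ne {a b : D.H} (ha : D.tau a = a) (hb : D.tau b ≠ b) : a ≠ b :=
  fun h => hb (h ▸ ha)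

theorem tau_tau_ne {a : D.H} (ha : D.tau a ≠ a) : D.tau (D.tau a) ≠ a :=
  fun h => ha (by simpa [h] using D.tau_cube a)

theorem ncard_univIn_of_existsUnique_color {h0 : D.H}
    (hcol : ∀ i : Fin k, ∃! x : D.H, x ∈ D.univIn h0 ∧ D.color x = i) :
    (D.univIn h0).ncard = k := by
  have hinj : Set.InjOn D.color (D.univIn h0) := fun x hx y hy hxy =>
    (hcol (D.color x)).unique ⟨hx, rfl⟩ ⟨hy, hxy.symm⟩
  have himage : D.color '' D.univIn h0 = Set.univ :=
    Set.eq_univ_of_forall fun i => let ⟨x, hx, _⟩ := hcol i; ⟨x, hx⟩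
  rw [← hinj.ncard_image, himage, Set.ncard_univ, Nat.card_fin]

def vertex (D : Diagram k) (a : D.H) : Finset D.H := {a, D.tau a, D.tau (D.tau a)}

theorem mem_vertex_self (a : D.H) : a ∈ D.vertex a := by simp [vertex]

theorem tau_mem_vertex {a b : D.H} (h : b ∈ D.vertex a) : D.tau b ∈ D.vertex a := by
  simp only [vertex, Finset.mem_insert, Finset.mem_singleton] at h ⊢
  rcases h with rfl | rfl | rfl <;> simp [D.tau_cube]

theorem vertex_eq_of_mem {a b : D.H} (h : b ∈ D.vertex a) : D.vertex b = D.vertex a := by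
  have hsub : D.vertex b ⊆ D.vertex a := by
    simp only [vertex, Finset.insert_subset_iff, Finset.singleton_subset_iff]
    exact ⟨h, tau_mem_vertex h, tau_mem_vertex (tau_mem_vertex h)⟩
  refine Finset.eq_of_subset_of_card_le hsub (Finset.card_le_card ?_)
  simp only [vertex, Finset.mem_insert, Finset.mem_singleton] at h
  rcases h with rfl | rfl | rfl <;> intro x <;>
    simp only [vertex, D.tau_cube, Finset.mem_insert, Finset.mem_singleton] <;> tauto

theorem tau_ne_of_mem_vertex {a b : D.H} (ha : D.tau a ≠ a) (h : b ∈ D.vertex a) :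
    D.tau b ≠ b := by
  simp only [vertex, Finset.mem_insert, Finset.mem_singleton] at h
  rcases h with rfl | rfl | rfl
  · exact ha
  · exact fun h => ha (D.tau_injective h)
  · exact fun h => ha (D.tau_injective (D.tau_injective h))

theorem card_vertex {a : D.H} (ha : D.tau a ≠ a) : (D.vertex a).card = 3 := by
  have h1 : D.tau (D.tau a) ≠ D.tau a := tau_ne_of_mem_vertex ha (by simp [vertex])
  rw [vertex, Finset.card_insert_of_notMem (by simp [Ne.symm ha, Ne.symm (D.tau_tau_ne ha)]),
    Finset.card_pair h1.symm]

theorem coe_vertex_subset_compSet {h0 a : D.H} (h : D.Reach h0 a) :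
    (D.vertex a : Set D.H) ⊆ D.compSet h0 := by
  intro b hb
  simp only [vertex, Finset.coe_insert, Finset.coe_singleton, Set.mem_insert_iff,
    Set.mem_singleton_iff] at hb
  rcases hb with rfl | rfl | rfl
  exacts [h, h.tau, h.tau.tau]

theorem compSet_subset_pair {z : D.H} (hz : D.tau z = z) (hsz : D.tau (D.sig z) = D.sig z) :
    D.compSet z ⊆ {z, D.sig z} := by
  intro h hr
  induction hr with
  | refl => exact Or.inl rfl
  | tail _ hstep ih =>
    rcases ih with rfl | rfl <;> rcases hstep with rfl | rfl <;> simp [hz, hsz, D.sig_invol]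

theorem ncard_compSet_le_two {z : D.H} (hz : D.tau z = z) (hsz : D.tau (D.sig z) = D.sig z) :
    (D.compSet z).ncard ≤ 2 :=
  (Set.ncard_le_ncard (compSet_subset_pair hz hsz)).trans
    ((Set.ncard_insert_le _ _).trans (by rw [Set.ncard_singleton]))

/-- Otherwise `z` and the three half-edges at the vertex of `sig z` lie in the component. -/
theorem tau_sig_eq_of_ncard_compSet_le_three {z : D.H} (hz : D.tau z = z)
    (h : (D.compSet z).ncard ≤ 3) : D.tau (D.sig z) = D.sig z := by
  by_contra hw
  have hz_notMem : z ∉ D.vertex (D.sig z) := fun hmem => tau_ne_of_mem_vertex hw hmem hz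
  have hsub : (↑(insert z (D.vertex (D.sig z))) : Set D.H) ⊆ D.compSet z := by
    rw [Finset.coe_insert]
    exact Set.insert_subset .refl (coe_vertex_subset_compSet (D.reach_sig z))
  have := Set.ncard_le_ncard hsub
  rw [Set.ncard_coe_finset, Finset.card_insert_of_notMem hz_notMem, card_vertex hw] at this
  omega

theorem tau_sig_ne_of_isTreeAt {h0 : D.H} (htree : D.IsTreeAt h0)
    (h3 : 3 ≤ (D.univIn h0).ncard) {z : D.H} (hz : z ∈ D.univIn h0) :
    D.tau (D.sig z) ≠ D.sig z := by
  intro hsz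
  have := ncard_compSet_le_two hz.2 hsz
  rw [IsTreeAt, compSet_eq_of_reach hz.1] at htree
  omega

/-- Without repeated colors there are at most two univalent vertices, so the tree is a single
edge. -/
theorem tau_sig_eq_and_color_of_not_isBoringAt {h : D.H} (hnb : ¬ D.IsBoringAt h)
    (hh : D.tau h = h) {j : Fin k}
    (hcol : ∀ z ∈ D.univIn h, D.color z = D.color h ∨ D.color z = j) :
    D.tau (D.sig h) = D.sig h ∧ D.color (D.sig h) = j := by
  simp only [IsBoringAt, not_or, not_exists, not_and, not_not] at hnb
  obtain ⟨hdistinct, htree⟩ := hnb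
  have hinj : Set.InjOn D.color (D.univIn h) := fun x hx y hy hxy => by
    by_contra hne
    exact hdistinct x hx y hy hne hxy
  have hleg : (D.univIn h).ncard ≤ 2 :=
    (Set.ncard_le_ncard_of_injOn (t := {D.color h, j}) D.color hcol hinj).trans
      ((Set.ncard_insert_le _ _).trans (by rw [Set.ncard_singleton]))
  rw [IsTreeAt] at htree
  have hfix := tau_sig_eq_of_ncard_compSet_le_three hh (by omega)
  refine ⟨hfix, (hcol _ ⟨D.reach_sig h, hfix⟩).resolve_left fun he => ?_⟩
  exact D.sig_ne h (hinj ⟨D.reach_sig h, hfix⟩ ⟨.refl, hh⟩ he)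

theorem exists_equiv_swap_struts {a b : D.H} (ha : D.tau a = a)
    (hsa : D.tau (D.sig a) = D.sig a) (hb : D.tau b = b) (hsb : D.tau (D.sig b) = D.sig b)
    (hab : a ≠ b) (hasb : a ≠ D.sig b) (hc : D.color a = D.color b)
    (hsc : D.color (D.sig a) = D.color (D.sig b)) :
    ∃ e : D.H ≃ D.H, (∀ h, e (D.sig h) = D.sig (e h)) ∧ (∀ h, e (D.tau h) = D.tau (e h)) ∧
      (∀ h, D.tau h = h → D.color (e h) = D.color h) ∧ e a = b := by
  have hbsa : b ≠ D.sig a := fun h => hasb (by rw [h, D.sig_invol])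
  have hnodup : [a, b, D.sig a, D.sig b].Nodup := by
    simp [hab, hasb, hbsa, (D.sig_ne a).symm, (D.sig_ne b).symm, D.sig_injective.ne hab]
  have hcomm : Commute (Equiv.swap a b) (Equiv.swap (D.sig a) (D.sig b)) :=
    (Equiv.Perm.disjoint_swap_swap hnodup).commute
  refine ⟨Equiv.swap a b * Equiv.swap (D.sig a) (D.sig b), fun h => ?_, fun h => ?_,
    fun h hh => ?_, ?_⟩
  · have h1 := D.sig_injective.swap_apply a b h
    have h2 := D.sig_injective.swap_apply (D.sig a) (D.sig b) (Equiv.swap a b h)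
    rw [D.sig_invol, D.sig_invol] at h2
    rw [Equiv.Perm.mul_apply, h1, h2, ← Equiv.Perm.mul_apply, ← hcomm.eq]
  · have h1 := D.tau_injective.swap_apply (D.sig a) (D.sig b) h
    have h2 := D.tau_injective.swap_apply a b (Equiv.swap (D.sig a) (D.sig b) h)
    rw [hsa, hsb] at h1
    rw [ha, hb] at h2
    rw [Equiv.Perm.mul_apply, h1, h2, Equiv.Perm.mul_apply]
  · simp only [Equiv.Perm.mul_apply, Equiv.swap_apply_def]
    split_ifs <;> simp_all
  · rw [Equiv.Perm.mul_apply, Equiv.swap_apply_of_ne_of_ne (D.sig_ne a).symm hasb,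
      Equiv.swap_apply_left]

structure Cherry (D : Diagram k) where
  x : D.H
  tau_ne : D.tau x ≠ x
  tau_sig : D.tau (D.sig x) = D.sig x
  tau_sig_tau : D.tau (D.sig (D.tau x)) = D.sig (D.tau x)

theorem exists_cherry_of_sig_mem_vertex {h0 z w : D.H} (hz : z ∈ D.univIn h0)
    (hw : w ∈ D.univIn h0) (hzw : z ≠ w) (hsz : D.tau (D.sig z) ≠ D.sig z)
    (hmem : D.sig w ∈ D.vertex (D.sig z)) : ∃ C : D.Cherry, D.Reach h0 C.x := by
  simp only [vertex, Finset.mem_insert, Finset.mem_singleton] at hmem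
  rcases hmem with h | h | h
  · exact absurd (D.sig_injective h).symm hzw
  · refine ⟨⟨D.sig z, hsz, ?_, ?_⟩, hz.1.sig⟩
    · rw [D.sig_invol]; exact hz.2
    · rw [← h, D.sig_invol]; exact hw.2
  · refine ⟨⟨D.tau (D.tau (D.sig z)), tau_ne_of_mem_vertex hsz (by simp [vertex]), ?_, ?_⟩,
      hz.1.sig.tau.tau⟩
    · rw [← h, D.sig_invol]; exact hw.2
    · rw [D.tau_cube, D.sig_invol]; exact hz.2

/-- Otherwise the vertices at the far ends of the `n` univalent vertices of the tree would be
`n` disjoint sets of three half-edges, whereas the tree has only `3 n - 6` half-edges at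
trivalent vertices. -/
theorem exists_cherry {h0 : D.H} (htree : D.IsTreeAt h0) (h3 : 3 ≤ (D.univIn h0).ncard) :
    ∃ C : D.Cherry, D.Reach h0 C.x := by
  classical
  by_contra hno
  have hfar := fun z (hz : z ∈ D.univIn h0) => tau_sig_ne_of_isTreeAt htree h3 hz
  have hdisj : (D.univIn h0).PairwiseDisjoint fun z => D.vertex (D.sig z) := by
    intro z hz w hw hzw
    refine Finset.disjoint_left.mpr fun y hyz hyw => hno ?_
    refine exists_cherry_of_sig_mem_vertex hz hw hzw (hfar z hz) ?_
    rw [← vertex_eq_of_mem hyz, vertex_eq_of_mem hyw]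
    exact mem_vertex_self _
  have hsub : (↑((D.univIn h0).toFinset.biUnion fun z => D.vertex (D.sig z)) : Set D.H) ⊆
      D.compSet h0 \ D.univIn h0 := by
    intro y hy
    simp only [Finset.coe_biUnion, Set.coe_toFinset, Set.mem_iUnion, Finset.mem_coe] at hy
    obtain ⟨z, hz, hy⟩ := hy
    exact ⟨coe_vertex_subset_compSet hz.1.sig hy,
      fun hyU => tau_ne_of_mem_vertex (hfar z hz) hy hyU.2⟩
  have hcard := Set.ncard_le_ncard hsub
  rw [Set.ncard_coe_finset, Finset.card_biUnion (by rwa [Set.coe_toFinset]),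
    Finset.sum_congr rfl fun z hz => card_vertex (hfar z (Set.mem_toFinset.mp hz)),
    Finset.sum_const, smul_eq_mul, ← Set.ncard_eq_toFinset_card',
    Set.ncard_sdiff fun _ h => h.1] at hcard
  rw [IsTreeAt] at htree
  omega

end Diagram

variable {k : ℕ}

theorem GraftTree.eq_root_of_tau_eq_root {X : GraftTree k} {x : X.H} (h : X.tau x = X.root) :
    x = X.root := by
  simpa [h, X.root_fix] using (X.tau_cube x).symm

section Graft

variable (E : Diagram k) (u : E.H) (X : GraftTree k)

theorem graftSig_invol (p : E.H ⊕ (X.H ⊕ Bool)) : graftSig E u X (graftSig E u X p) = p := by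
  rcases p with a | x | _ | _
  · by_cases h1 : a = u
    · simp [graftSig, h1]
    by_cases h2 : a = E.sig u
    · simp [graftSig, h2, E.sig_ne u]
    have h1' : E.sig a ≠ u := fun h => h2 (by rw [← h, E.sig_invol])
    have h2' : E.sig a ≠ E.sig u := E.sig_injective.ne h1
    simp [graftSig, h1, h2, h1', h2', E.sig_invol]
  · simp [graftSig, X.sig_invol]
  · simp [graftSig]
  · simp [graftSig, E.sig_ne u]

theorem graftSig_ne (p : E.H ⊕ (X.H ⊕ Bool)) : graftSig E u X p ≠ p := by
  rcases p with a | x | _ | _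
  · simp only [graftSig]
    split_ifs <;> simp [E.sig_ne]
  · simpa [graftSig] using X.sig_ne x
  · simp [graftSig]
  · simp [graftSig]

theorem graftTau_cube (p : E.H ⊕ (X.H ⊕ Bool)) :
    graftTau E u X (graftTau E u X (graftTau E u X p)) = p := by
  rcases p with a | x | _ | _
  · simp [graftTau, E.tau_cube]
  · by_cases hx : x = X.root
    · simp [graftTau, hx]
    have h1 : X.tau x ≠ X.root := fun h => hx (GraftTree.eq_root_of_tau_eq_root h)
    have h2 : X.tau (X.tau x) ≠ X.root := fun h => h1 (GraftTree.eq_root_of_tau_eq_root h)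
    simp [graftTau, hx, h1, h2, X.tau_cube]
  · simp [graftTau]
  · simp [graftTau]

theorem graft_reach_inl_true :
    Relation.ReflTransGen (HalfEdgeStep (graftSig E u X) (graftTau E u X))
      (.inl u) (.inr (.inr true)) :=
  (Relation.ReflTransGen.single (.of_sig (b := .inr (.inr false)) (by simp [graftSig]))).tail
    (.of_tau rfl)

theorem graft_reach_root_inl :
    Relation.ReflTransGen (HalfEdgeStep (graftSig E u X) (graftTau E u X))
      (.inr (.inl X.root)) (.inl u) :=
  (Relation.ReflTransGen.single (.of_tau (b := .inr (.inr false)) (by simp [graftTau]))).tail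
    (.of_sig rfl)

theorem graft_reach_inl {a b : E.H} (h : E.Reach a b) :
    Relation.ReflTransGen (HalfEdgeStep (graftSig E u X) (graftTau E u X)) (.inl a) (.inl b) := by
  refine Relation.ReflTransGen.lift' Sum.inl (fun a b hab => ?_) _ _ h
  rcases hab with rfl | rfl
  · by_cases h1 : a = u
    · subst h1
      exact (graft_reach_inl_true E a X).tail (.of_sig rfl)
    by_cases h2 : a = E.sig u
    · subst h2
      rw [E.sig_invol]
      exact ((Relation.ReflTransGen.single (.of_sig (b := .inr (.inr true))
        (by simp [graftSig, E.sig_ne u]))).tail (.of_tau rfl)).trans (graft_reach_root_inl E u X)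
    · exact .single (.of_sig (by simp [graftSig, h1, h2]))
  · exact .single (.of_tau rfl)

theorem graft_reach_root (x : X.H) :
    Relation.ReflTransGen (HalfEdgeStep (graftSig E u X) (graftTau E u X))
      (.inr (.inl X.root)) (.inr (.inl x)) := by
  refine Relation.ReflTransGen.lift' (p := HalfEdgeStep (graftSig E u X) (graftTau E u X))
    (fun y => .inr (.inl y)) (fun a b hab => ?_) _ _ (X.conn x)
  rcases hab with rfl | rfl
  · exact .single (.of_sig rfl)
  · by_cases ha : a = X.root
    · subst ha
      rw [X.root_fix]
    · exact .single (.of_tau (by simp [graftTau, ha]))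

theorem graft_exists_reach_fixed (p : E.H ⊕ (X.H ⊕ Bool)) :
    ∃ h', Relation.ReflTransGen (HalfEdgeStep (graftSig E u X) (graftTau E u X)) p h' ∧
      graftTau E u X h' = h' := by
  have from_inl (a : E.H) : ∃ h', Relation.ReflTransGen
      (HalfEdgeStep (graftSig E u X) (graftTau E u X)) (.inl a) h' ∧ graftTau E u X h' = h' :=
    let ⟨h', hp, hfix⟩ := E.conn a
    ⟨.inl h', graft_reach_inl E u X hp, by simp [graftTau, hfix]⟩
  obtain ⟨h', hp, hfix⟩ := from_inl u
  rcases p with a | x | _ | _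
  · exact from_inl a
  · refine ⟨h', ((reflTransGen_halfEdgeStep_symm (graftSig_invol E u X) (graftTau_cube E u X)
      (graft_reach_root E u X x)).trans (graft_reach_root_inl E u X)).trans hp, hfix⟩
  · exact ⟨h', (Relation.ReflTransGen.single (.of_sig (b := Sum.inl u) rfl)).trans hp, hfix⟩
  · exact ⟨h', ((Relation.ReflTransGen.single (.of_tau (b := Sum.inr (Sum.inl X.root)) rfl)).trans
      (graft_reach_root_inl E u X)).trans hp, hfix⟩

noncomputable def Diagram.graft : Diagram k where
  H := E.H ⊕ (X.H ⊕ Bool)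
  fin := inferInstance
  dec := inferInstance
  sig := graftSig E u X
  sig_invol := graftSig_invol E u X
  sig_ne := graftSig_ne E u X
  tau := graftTau E u X
  tau_cube := graftTau_cube E u X
  color := graftColor E u X
  conn := graft_exists_reach_fixed E u X

theorem isGraft_graft : IsGraft E u X (E.graft u X) :=
  ⟨Equiv.refl _, fun _ => rfl, fun _ => rfl, fun _ _ => rfl⟩

variable {E u X}

/-- The two univalent vertices end up in the same component of the graft. -/
theorem Diagram.hasBoring_graft {z : E.H} (hz : E.tau z = z) (hr : E.Reach u z) {y : X.H}
    (hy : X.tau y = y) (hyr : y ≠ X.root) (hc : X.color y = E.color z) :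
    (E.graft u X).HasBoring := by
  refine ⟨.inl u, Or.inl ⟨.inl z, ⟨graft_reach_inl E u X hr, by simp [graft, graftTau, hz]⟩,
    .inr (.inl y), ⟨((graft_reach_inl_true E u X).tail (.of_tau rfl)).trans
      (graft_reach_root E u X y), ?_⟩, Sum.inl_ne_inr, hc.symm⟩⟩
  simp [graft, graftTau, hyr, hy]

end Graft

theorem graftSig_sumMap {E E' : Diagram k} (e : E.H ≃ E'.H)
    (hsig : ∀ h, e (E.sig h) = E'.sig (e h)) (u : E.H) (X : GraftTree k)
    (p : E.H ⊕ (X.H ⊕ Bool)) :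
    Sum.map e id (graftSig E u X p) = graftSig E' (e u) X (Sum.map e id p) := by
  rcases p with a | x | _ | _
  · by_cases h1 : a = u
    · simp [graftSig, h1]
    by_cases h2 : a = E.sig u
    · simp [graftSig, h2, hsig, E.sig_ne, E'.sig_ne]
    have h2' : e a ≠ E'.sig (e u) := by rw [← hsig]; exact e.injective.ne h2
    simp [graftSig, h1, h2, h2', hsig]
  · rfl
  · rfl
  · simp [graftSig, hsig]

theorem graftTau_sumMap {E E' : Diagram k} (e : E.H ≃ E'.H)
    (htau : ∀ h, e (E.tau h) = E'.tau (e h)) (u : E.H) (X : GraftTree k)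
    (p : E.H ⊕ (X.H ⊕ Bool)) :
    Sum.map e id (graftTau E u X p) = graftTau E' (e u) X (Sum.map e id p) := by
  rcases p with a | x | _ | _
  · simp [graftTau, htau]
  · by_cases hx : x = X.root <;> simp [graftTau, hx]
  · rfl
  · rfl

theorem IsGraft.of_equiv {E E' : Diagram k} (e : E.H ≃ E'.H)
    (hsig : ∀ h, e (E.sig h) = E'.sig (e h)) (htau : ∀ h, e (E.tau h) = E'.tau (e h))
    (hcol : ∀ h, E.tau h = h → E'.color (e h) = E.color h) {u : E.H} {X : GraftTree k}
    {G : Diagram k} (hG : IsGraft E' (e u) X G) : IsGraft E u X G := by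
  obtain ⟨f, hfs, hft, hfc⟩ := hG
  have hcolor (p) (hp : graftTau E u X p = p) :
      graftColor E' (e u) X (Sum.map e id p) = graftColor E u X p := by
    rcases p with a | x | _ | _
    · exact hcol a (Sum.inl_injective hp)
    · rfl
    · simp [graftTau] at hp
    · simp [graftTau] at hp
  refine ⟨(Equiv.sumCongr e (Equiv.refl _)).trans f, fun p => ?_, fun p => ?_, fun p hp => ?_⟩
  · simp only [Equiv.trans_apply, Equiv.sumCongr_apply, Equiv.coe_refl, graftSig_sumMap e hsig,
      hfs]
  · simp only [Equiv.trans_apply, Equiv.sumCongr_apply, Equiv.coe_refl, graftTau_sumMap e htau,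
      hft]
  · simp only [Equiv.trans_apply, Equiv.sumCongr_apply, Equiv.coe_refl]
    rw [hfc _ (by rw [← graftTau_sumMap e htau, hp]), hcolor p hp]

theorem bhlClass_eq_zero_of_hasBoring {D : Diagram k} (h : D.HasBoring) : bhlClass D = 0 :=
  (Submodule.Quotient.mk_eq_zero _).mpr (Submodule.subset_span (Or.inl (Or.inr ⟨D, h, rfl⟩)))

/-- The link relation for `E`, `i`, `X` then reads `n • D = 0` with `n ≥ 1`. -/
theorem bhlClass_eq_zero_of_isGraft {D E : Diagram k} {i : Fin k} {X : GraftTree k} {u : E.H}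
    (hu : E.tau u = u) (hui : E.color u = i) (hD : IsGraft E u X D)
    (h : ∀ v, E.tau v = v → E.color v = i → IsGraft E v X D ∨ (E.graft v X).HasBoring) :
    bhlClass D = 0 := by
  classical
  set A := Finset.univ.filter fun v => E.tau v = v ∧ E.color v = i
  let g : E.H → Diagram k := fun v => if IsGraft E v X D then D else E.graft v X
  have hlink : ∑ v ∈ A, fd (g v) ∈ BhlRel k := by
    refine Submodule.subset_span (Or.inr ⟨E, i, X, g, fun v _ _ => ?_, rfl⟩)
    by_cases hv : IsGraft E v X D
    · simp [g, hv]
    · simpa [g, hv] using isGraft_graft E v X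
  have hterm (v) (hv : v ∈ A) :
      bhlClass (g v) = if IsGraft E v X D then bhlClass D else 0 := by
    simp only [A, Finset.mem_filter, Finset.mem_univ, true_and] at hv
    by_cases hP : IsGraft E v X D
    · simp [g, hP]
    · simp [g, hP, bhlClass_eq_zero_of_hasBoring ((h v hv.1 hv.2).resolve_left hP)]
  have hsum : ((A.filter fun v => IsGraft E v X D).card : ℝ) • bhlClass D = 0 := by
    rw [Nat.cast_smul_eq_nsmul, ← Finset.sum_const, Finset.sum_filter,
      ← Finset.sum_congr rfl hterm]
    exact (map_sum (BhlRel k).mkQ _ _).symm.trans ((Submodule.Quotient.mk_eq_zero _).mpr hlink)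
  refine (smul_eq_zero.mp hsum).resolve_left (Nat.cast_ne_zero.mpr ?_)
  exact Finset.card_ne_zero_of_mem (a := u) (by simp [A, hu, hui, hD])

namespace Diagram.Cherry

variable {k : ℕ} {D : Diagram k} (C : D.Cherry)

/-- The cherry vertex is `(x, τ x, t)`; `p` and `q` are the leaves at `x` and `τ x`. -/
def p : D.H := D.sig C.x

def q : D.H := D.sig (D.tau C.x)

def t : D.H := D.tau (D.tau C.x)

def halfEdges : Set D.H := {C.p, C.q, C.x, D.tau C.x}

theorem tau_p : D.tau C.p = C.p := C.tau_sig

theorem tau_q : D.tau C.q = C.q := C.tau_sig_tau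

theorem tau_t : D.tau C.t = C.x := D.tau_cube C.x

theorem tau_tau_x_ne : D.tau (D.tau C.x) ≠ D.tau C.x := fun h => C.tau_ne (D.tau_injective h)

theorem tau_t_ne : D.tau C.t ≠ C.t := fun h => D.tau_tau_ne C.tau_ne (h.symm.trans C.tau_t)

theorem reach_t : D.Reach C.x C.t := (D.reach_tau _).tau

theorem halfEdges_subset : C.halfEdges ⊆ D.compSet C.x := by
  rintro h (rfl | rfl | rfl | rfl)
  exacts [D.reach_sig _, (D.reach_tau _).sig, .refl, D.reach_tau _]

theorem p_ne_q : C.p ≠ C.q := D.sig_injective.ne C.tau_ne.symm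

theorem ncard_halfEdges : C.halfEdges.ncard = 4 := by
  have hp {b : D.H} := ne_of_tau_eq_of_tau_ne C.tau_p (b := b)
  have hq {b : D.H} := ne_of_tau_eq_of_tau_ne C.tau_q (b := b)
  rw [halfEdges, Set.ncard_insert_of_notMem (by simp [C.p_ne_q, hp C.tau_ne, hp C.tau_tau_x_ne]),
    Set.ncard_insert_of_notMem (by simp [hq C.tau_ne, hq C.tau_tau_x_ne]),
    Set.ncard_pair C.tau_ne.symm]

theorem mem_halfEdges_iff_of_tau_eq {h : D.H} (hh : D.tau h = h) :
    h ∈ C.halfEdges ↔ h = C.p ∨ h = C.q := by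
  have hx := ne_of_tau_eq_of_tau_ne hh C.tau_ne
  have hx' := ne_of_tau_eq_of_tau_ne hh C.tau_tau_x_ne
  simp [halfEdges, hx, hx']

theorem t_notMem_halfEdges : C.t ∉ C.halfEdges := by
  have hp := ne_of_tau_eq_of_tau_ne C.tau_p C.tau_t_ne
  have hq := ne_of_tau_eq_of_tau_ne C.tau_q C.tau_t_ne
  simp only [halfEdges, Set.mem_insert_iff, Set.mem_singleton_iff, not_or]
  exact ⟨hp.symm, hq.symm, D.tau_tau_ne C.tau_ne, C.tau_tau_x_ne⟩

theorem sig_mem_halfEdges_of_mem {h : D.H} (hh : h ∈ C.halfEdges) :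
    D.sig h ∈ C.halfEdges := by
  rcases hh with rfl | rfl | rfl | rfl
  · simp [halfEdges, p, D.sig_invol]
  · simp [halfEdges, q, D.sig_invol]
  · simp [halfEdges, p]
  · simp [halfEdges, q]

theorem sig_mem_halfEdges_iff {h : D.H} : D.sig h ∈ C.halfEdges ↔ h ∈ C.halfEdges :=
  ⟨fun hh => D.sig_invol h ▸ C.sig_mem_halfEdges_of_mem hh, C.sig_mem_halfEdges_of_mem⟩

theorem tau_eq_t_of_mem {h : D.H} (hh : h ∈ C.halfEdges) (hth : D.tau h ∉ C.halfEdges) :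
    D.tau h = C.t := by
  rcases hh with rfl | rfl | rfl | rfl
  · exact absurd (by rw [C.tau_p]; exact Or.inl rfl) hth
  · exact absurd (by rw [C.tau_q]; exact Or.inr (Or.inl rfl)) hth
  · exact absurd (Or.inr (Or.inr (Or.inr rfl))) hth
  · rfl

theorem tau_ne_t_of_notMem {h : D.H} (hh : h ∉ C.halfEdges) : D.tau h ≠ C.t :=
  fun ht => hh (Or.inr (Or.inr (Or.inr (D.tau_injective ht))))

/-- The rest of the cherry's component: the rooted tree to be grafted back. -/
def trunk : Set D.H := D.compSet C.x \ C.halfEdges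

theorem t_mem_trunk : C.t ∈ C.trunk := ⟨C.reach_t, C.t_notMem_halfEdges⟩

theorem sig_mem_trunk {h : D.H} (hh : h ∈ C.trunk) : D.sig h ∈ C.trunk :=
  ⟨Reach.sig hh.1, fun h' => hh.2 (C.sig_mem_halfEdges_iff.mp h')⟩

theorem tau_mem_trunk {h : D.H} (hh : h ∈ C.trunk) (ht : h ≠ C.t) : D.tau h ∈ C.trunk := by
  refine ⟨Reach.tau hh.1, fun h' => ?_⟩
  rcases h' with h' | h' | h' | h'
  · exact hh.2 (D.eq_of_tau_eq_fixed C.tau_p h' ▸ Or.inl rfl)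
  · exact hh.2 (D.eq_of_tau_eq_fixed C.tau_q h' ▸ Or.inr (Or.inl rfl))
  · exact ht (by rw [t, ← h', D.tau_cube])
  · exact hh.2 (D.tau_injective h' ▸ Or.inr (Or.inr (Or.inl rfl)))

def trunkSig (a : C.trunk) : C.trunk := ⟨D.sig a, C.sig_mem_trunk a.2⟩

/-- `t` becomes univalent: it is the root of `trunkTree`. -/
def trunkTau (a : C.trunk) : C.trunk :=
  if ha : a.1 = C.t then a else ⟨D.tau a, C.tau_mem_trunk a.2 ha⟩

theorem trunkTau_of_ne {a : C.trunk} (ha : a.1 ≠ C.t) :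
    (C.trunkTau a).1 = D.tau a := by
  simp [trunkTau, ha]

theorem trunkTau_cube (a : C.trunk) : C.trunkTau (C.trunkTau (C.trunkTau a)) = a := by
  by_cases ha : a.1 = C.t
  · simp [trunkTau, ha]
  have h1 : (C.trunkTau a).1 ≠ C.t := by
    rw [C.trunkTau_of_ne ha]; exact C.tau_ne_t_of_notMem a.2.2
  have h2 : (C.trunkTau (C.trunkTau a)).1 ≠ C.t := by
    rw [C.trunkTau_of_ne h1]; exact C.tau_ne_t_of_notMem (C.trunkTau a).2.2
  apply Subtype.ext
  rw [C.trunkTau_of_ne h2, C.trunkTau_of_ne h1, C.trunkTau_of_ne ha, D.tau_cube]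

theorem trunkTau_eq_self_iff (a : C.trunk) : C.trunkTau a = a ↔ a.1 = C.t ∨ D.tau a = a := by
  by_cases ha : a.1 = C.t
  · simp [trunkTau, ha]
  · simp [trunkTau, ha, Subtype.ext_iff]

theorem reach_trunk {b : D.H} (hb : b ∈ C.trunk) :
    Relation.ReflTransGen (HalfEdgeStep C.trunkSig C.trunkTau) ⟨C.t, C.t_mem_trunk⟩ ⟨b, hb⟩ := by
  suffices ∀ b, D.Reach C.t b → ∀ hb : b ∈ C.trunk, Relation.ReflTransGen
      (HalfEdgeStep C.trunkSig C.trunkTau) ⟨C.t, C.t_mem_trunk⟩ ⟨b, hb⟩ from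
    this b (C.reach_t.symm.trans hb.1) hb
  intro b hr
  induction hr with
  | refl => exact fun _ => .refl
  | @tail a b hta hab ih =>
    intro hb
    by_cases ha : a ∈ C.halfEdges
    · rcases hab with rfl | rfl
      · exact absurd (C.sig_mem_halfEdges_of_mem ha) hb.2
      · rw [show (⟨D.tau a, hb⟩ : C.trunk) = ⟨C.t, C.t_mem_trunk⟩ from
          Subtype.ext (C.tau_eq_t_of_mem ha hb.2)]
    have ha' : a ∈ C.trunk := ⟨C.reach_t.trans hta, ha⟩
    refine (ih ha').tail ?_
    rcases hab with rfl | rfl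
    · exact .of_sig rfl
    · have hat : a ≠ C.t := fun h =>
        hb.2 (by rw [h, C.tau_t]; exact Or.inr (Or.inr (Or.inl rfl)))
      exact .of_tau (Subtype.ext (C.trunkTau_of_ne (a := ⟨a, ha'⟩) hat))

theorem ncard_trunk : C.trunk.ncard + 4 = (D.compSet C.x).ncard := by
  rw [trunk, Set.ncard_sdiff C.halfEdges_subset, C.ncard_halfEdges]
  have := Set.ncard_le_ncard C.halfEdges_subset
  rw [C.ncard_halfEdges] at this
  omega

theorem setOf_trunk_fixed :
    {h | h ∈ C.trunk ∧ (h = C.t ∨ D.tau h = h)} = insert C.t (D.univIn C.x \ {C.p, C.q}) := by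
  ext h
  by_cases hht : h = C.t
  · simp [hht, C.t_mem_trunk]
  by_cases hfix : D.tau h = h
  · simp [hht, hfix, trunk, compSet, univIn, C.mem_halfEdges_iff_of_tau_eq hfix]
  · simp [hht, hfix, univIn]

theorem ncard_trunk_fixed (h3 : 2 ≤ (D.univIn C.x).ncard) :
    {h | h ∈ C.trunk ∧ (h = C.t ∨ D.tau h = h)}.ncard + 1 = (D.univIn C.x).ncard := by
  have hpq : {C.p, C.q} ⊆ D.univIn C.x := by
    rintro h (rfl | rfl)
    exacts [⟨D.reach_sig _, C.tau_p⟩, ⟨(D.reach_tau _).sig, C.tau_q⟩]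
  rw [C.setOf_trunk_fixed, Set.ncard_insert_of_notMem fun h => C.tau_t_ne h.1.2,
    Set.ncard_sdiff hpq, Set.ncard_pair C.p_ne_q]
  omega

theorem trunk_tree (htree : D.IsTreeAt C.x) :
    Nat.card C.trunk + 6 = 4 * Nat.card {a : C.trunk // C.trunkTau a = a} := by
  have hfixed : Nat.card {a : C.trunk // C.trunkTau a = a} =
      {h | h ∈ C.trunk ∧ (h = C.t ∨ D.tau h = h)}.ncard := by
    rw [← Nat.card_coe_set_eq]
    exact Nat.card_congr ((Equiv.subtypeEquivRight C.trunkTau_eq_self_iff).trans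
      (Equiv.subtypeSubtypeEquivSubtypeInter (· ∈ C.trunk) fun h => h = C.t ∨ D.tau h = h))
  rw [IsTreeAt] at htree
  have htrunk := C.ncard_trunk
  have hfix := C.ncard_trunk_fixed (by omega)
  rw [hfixed, Nat.card_coe_set_eq]
  omega

noncomputable def trunkTree (htree : D.IsTreeAt C.x) : GraftTree k where
  H := C.trunk
  fin := Fintype.ofFinite _
  dec := inferInstance
  sig := C.trunkSig
  sig_invol a := Subtype.ext (D.sig_invol a)
  sig_ne a h := D.sig_ne a (congrArg Subtype.val h)
  tau := C.trunkTau
  tau_cube := C.trunkTau_cube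
  root := ⟨C.t, C.t_mem_trunk⟩
  root_fix := dif_pos rfl
  color a := D.color a
  conn a := C.reach_trunk a.2
  tree := C.trunk_tree htree

def outside : Set D.H := (D.compSet C.x)ᶜ

def baseSig : C.outside ⊕ Bool → C.outside ⊕ Bool
  | .inl a => .inl ⟨D.sig a, D.not_reach_sig a.2⟩
  | .inr b => .inr !b

def baseTau : C.outside ⊕ Bool → C.outside ⊕ Bool
  | .inl a => .inl ⟨D.tau a, D.not_reach_tau a.2⟩
  | .inr b => .inr b

def baseColor : C.outside ⊕ Bool → Fin k
  | .inl a => D.color a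
  | .inr false => D.color C.p
  | .inr true => D.color C.q

theorem reach_outside {a b : D.H} (hab : D.Reach a b) (ha : a ∈ C.outside) (hb : b ∈ C.outside) :
    Relation.ReflTransGen (HalfEdgeStep C.baseSig C.baseTau) (.inl ⟨a, ha⟩) (.inl ⟨b, hb⟩) := by
  classical
  let f : D.H → C.outside ⊕ Bool := fun h =>
    if hh : h ∈ C.outside then .inl ⟨h, hh⟩ else .inr false
  have hf : ∀ {h} (hh : h ∈ C.outside), f h = .inl ⟨h, hh⟩ := fun hh => dif_pos hh
  rw [← hf ha, ← hf hb]
  refine Relation.ReflTransGen.lift' f (fun c d hcd => ?_) _ _ hab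
  by_cases hc : c ∈ C.outside
  · have hd : d ∈ C.outside := by
      rcases hcd with rfl | rfl
      exacts [D.not_reach_sig hc, D.not_reach_tau hc]
    rw [Function.onFun, hf hc, hf hd]
    rcases hcd with rfl | rfl
    exacts [.single (.of_sig rfl), .single (.of_tau rfl)]
  · have hc' : D.Reach C.x c := not_not.mp hc
    have hd : d ∉ C.outside := by
      rcases hcd with rfl | rfl
      exacts [not_not.mpr hc'.sig, not_not.mpr hc'.tau]
    simp only [Function.onFun, f, dif_neg hc, dif_neg hd, Relation.ReflTransGen.refl]

/-- `D` with the cherry's component replaced by a strut colored like the cherry's leaves. -/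
noncomputable def base : Diagram k where
  H := C.outside ⊕ Bool
  fin := Fintype.ofFinite _
  dec := inferInstance
  sig := C.baseSig
  sig_invol := by
    rintro (a | b)
    · exact congrArg Sum.inl (Subtype.ext (D.sig_invol a))
    · simp [baseSig]
  sig_ne := by
    rintro (a | b) h
    · exact D.sig_ne a (congrArg Subtype.val (Sum.inl_injective h))
    · simp [baseSig] at h
  tau := C.baseTau
  tau_cube := by
    rintro (a | b)
    · exact congrArg Sum.inl (Subtype.ext (D.tau_cube a))
    · rfl
  color := C.baseColor
  conn := by
    rintro (a | b)
    · obtain ⟨h', hp, hfix⟩ := D.conn a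
      have hh' : h' ∈ C.outside := fun hr => a.2 (hr.trans (Reach.symm hp))
      exact ⟨.inl ⟨h', hh'⟩, C.reach_outside hp a.2 hh', congrArg Sum.inl (Subtype.ext hfix)⟩
    · exact ⟨.inr b, .refl, rfl⟩

/-- Identifies the half-edges of the graft of the trunk at the strut end `false` with those
of `D`. -/
def reglue : (C.outside ⊕ Bool) ⊕ (C.trunk ⊕ Bool) → D.H
  | .inl (.inl a) => a
  | .inl (.inr false) => C.p
  | .inl (.inr true) => C.q
  | .inr (.inl a) => a
  | .inr (.inr false) => C.x
  | .inr (.inr true) => D.tau C.x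

theorem reglue_surjective : Function.Surjective C.reglue := by
  intro h
  by_cases hr : D.Reach C.x h
  · by_cases hm : h ∈ C.halfEdges
    · rcases hm with rfl | rfl | rfl | rfl
      exacts [⟨.inl (.inr false), rfl⟩, ⟨.inl (.inr true), rfl⟩, ⟨.inr (.inr false), rfl⟩,
        ⟨.inr (.inr true), rfl⟩]
    · exact ⟨.inr (.inl ⟨h, hr, hm⟩), rfl⟩
  · exact ⟨.inl (.inl ⟨h, hr⟩), rfl⟩

theorem reglue_bijective : Function.Bijective C.reglue := by
  refine (Nat.bijective_iff_surjective_and_card _).mpr ⟨C.reglue_surjective, ?_⟩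
  have := Set.ncard_add_ncard_compl (D.compSet C.x)
  have := C.ncard_trunk
  rw [Nat.card_sum, Nat.card_sum, Nat.card_sum, Nat.card_coe_set_eq, Nat.card_coe_set_eq,
    Nat.card_eq_two_iff.mpr ⟨false, true, by simp, by ext; simp⟩, outside]
  omega

theorem isGraft_trunkTree (htree : D.IsTreeAt C.x) :
    IsGraft C.base (.inr false) (C.trunkTree htree) D := by
  refine ⟨Equiv.ofBijective _ C.reglue_bijective, ?_, ?_, ?_⟩
  · rintro ((a | _ | _) | a | _ | _)
    · rfl
    · exact (D.sig_invol C.x).symm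
    · exact (D.sig_invol _).symm
    · rfl
    · rfl
    · rfl
  · rintro ((a | _ | _) | a | _ | _)
    · rfl
    · exact C.tau_p.symm
    · exact C.tau_q.symm
    · by_cases ha : a = (C.trunkTree htree).root
      · subst ha
        simp only [graftTau]
        exact C.tau_t.symm
      · simp only [graftTau, if_neg ha]
        exact C.trunkTau_of_ne fun h => ha (Subtype.ext h)
    · rfl
    · rfl
  · rintro ((a | _ | _) | a | _ | _) hfix
    · rfl
    · rfl
    · rfl
    · rfl
    · simp [graftTau] at hfix
    · simp [graftTau] at hfix

theorem color_p_ne_color_q (hnb : ¬ D.IsBoringAt C.x) : D.color C.p ≠ D.color C.q :=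
  fun h => hnb (Or.inl ⟨C.p, ⟨D.reach_sig _, C.tau_p⟩, C.q, ⟨(D.reach_tau _).sig, C.tau_q⟩,
    C.p_ne_q, h⟩)

/-- The trunk carries every color other than those of `p` and `q`. -/
theorem hasBoring_graft_trunkTree (htree : D.IsTreeAt C.x)
    (hcol : ∀ i, ∃ z ∈ D.univIn C.x, D.color z = i) {h : D.H} (hh : h ∈ C.outside) {z' : D.H}
    (hz' : z' ∈ D.univIn h) (hp : D.color z' ≠ D.color C.p) (hq : D.color z' ≠ D.color C.q) :
    (C.base.graft (.inl ⟨h, hh⟩) (C.trunkTree htree)).HasBoring := by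
  obtain ⟨z, hz, hzc⟩ := hcol (D.color z')
  have hz_trunk : z ∈ C.trunk := by
    refine ⟨hz.1, fun hm => ?_⟩
    rcases (C.mem_halfEdges_iff_of_tau_eq hz.2).mp hm with rfl | rfl
    exacts [hp hzc.symm, hq hzc.symm]
  have hz'_out : z' ∈ C.outside := fun hr => hh (hr.trans hz'.1.symm)
  refine hasBoring_graft (z := .inl ⟨z', hz'_out⟩) (y := ⟨z, hz_trunk⟩)
    (congrArg Sum.inl (Subtype.ext hz'.2)) (C.reach_outside hz'.1 hh hz'_out)
    ((C.trunkTau_eq_self_iff _).mpr (Or.inr hz.2)) (fun he => ?_) hzc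
  have hzt : z = C.t := congrArg Subtype.val he
  exact C.tau_t_ne (hzt ▸ hz.2)

theorem isGraft_trunkTree_of_strut (htree : D.IsTreeAt C.x) {h : D.H} (hh : h ∈ C.outside)
    (hfix : D.tau h = h) (hc : D.color h = D.color C.p) (hsfix : D.tau (D.sig h) = D.sig h)
    (hsc : D.color (D.sig h) = D.color C.q) :
    IsGraft C.base (.inl ⟨h, hh⟩) (C.trunkTree htree) D := by
  obtain ⟨e, hsig, htau, hcol, he⟩ := C.base.exists_equiv_swap_struts (a := .inl ⟨h, hh⟩)
    (b := .inr false) (congrArg Sum.inl (Subtype.ext hfix))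
    (congrArg Sum.inl (Subtype.ext hsfix)) rfl rfl Sum.inl_ne_inr Sum.inl_ne_inr hc hsc
  exact IsGraft.of_equiv e hsig htau hcol (he ▸ C.isGraft_trunkTree htree)

/-- The component of `v` is either a strut colored like `p — q`, which can be exchanged with
the strut of `base`, or carries a color of the trunk. -/
theorem isGraft_or_hasBoring (htree : D.IsTreeAt C.x) (hnb : ¬ D.HasBoring)
    (hcol : ∀ i, ∃ z ∈ D.univIn C.x, D.color z = i) (v : C.base.H) (hv : C.base.tau v = v)
    (hvc : C.base.color v = D.color C.p) :
    IsGraft C.base v (C.trunkTree htree) D ∨ (C.base.graft v (C.trunkTree htree)).HasBoring := by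
  rcases v with ⟨h, hh⟩ | _ | _
  · have hfix : D.tau h = h := congrArg Subtype.val (Sum.inl_injective hv)
    by_cases hK : ∃ z' ∈ D.univIn h, D.color z' ≠ D.color C.p ∧ D.color z' ≠ D.color C.q
    · obtain ⟨z', hz', hp, hq⟩ := hK
      exact Or.inr (C.hasBoring_graft_trunkTree htree hcol hh hz' hp hq)
    · push Not at hK
      have hstrut := tau_sig_eq_and_color_of_not_isBoringAt (fun hb => hnb ⟨h, hb⟩) hfix
        fun z hz => (em (D.color z = D.color C.p)).imp (·.trans hvc.symm) (hK z hz)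
      exact Or.inl (C.isGraft_trunkTree_of_strut htree hh hfix hvc hstrut.1 hstrut.2)
  · exact Or.inl (C.isGraft_trunkTree htree)
  · exact absurd hvc.symm (C.color_p_ne_color_q fun hb => hnb ⟨C.x, hb⟩)

end Diagram.Cherry

/-- If `k ≥ 3` and the unitrivalent diagram `D` on `k` colors has a
connected component (the one containing the half-edge `h0`) which is a tree with exactly
one univalent vertex of each of the `k` colors (hence of degree `k - 1`), then the class
of `D` in `B^{hl}(k)` is zero. -/
theorem finite_type_link_homotopy_stmt0 (k : ℕ) (hk : 3 ≤ k) (D : Diagram k) (h0 : D.H)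
    (htree : D.IsTreeAt h0)
    (hcol : ∀ i : Fin k, ∃! x : D.H, x ∈ D.univIn h0 ∧ D.color x = i) :
    bhlClass D = 0 := by
  by_cases hnb : D.HasBoring
  · exact bhlClass_eq_zero_of_hasBoring hnb
  have h3 : 3 ≤ (D.univIn h0).ncard := (D.ncard_univIn_of_existsUnique_color hcol).symm ▸ hk
  obtain ⟨C, hC⟩ := D.exists_cherry htree h3
  rw [Diagram.isTreeAt_iff_of_reach hC] at htree
  rw [Diagram.univIn_eq_of_reach hC] at hcol
  exact bhlClass_eq_zero_of_isGraft (E := C.base) (u := .inr false) rfl rfl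
    (C.isGraft_trunkTree htree) (C.isGraft_or_hasBoring htree hnb fun i => (hcol i).exists)
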